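/- arXiv:2210.14095 — 2 statements merged into one kernel-verified Lean document; each statement's English description precedes it below -/
import Mathlib

section
/- Let x_1, x_2, …, x_M ∈ [0,1], and let g : [0,1] → ℝ be a function of bounded variation which vanishes outside an interval [c,d] ⊆ [0,1]. Then | (1/M) · Σ_{m=1}^M g(x_m) − ∫_0^1 g(x) dx | ≤ V(g;[0,1]) · sup_{I ⊆ [c,d]} | (1/M) · Σ_{m=1}^M 1_I(x_m) − λ(I) |, where the supremum is taken over all subintervals I of [c,d]. -/
/-!
Sort the sample points lying in `[c, d]`, together with `c` and `d`, into a partition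
`c = w₀ < ⋯ < w_K = d`. Abel summation writes the quadrature error as the boundary term
`disc [c, d] · ((1 - θ) g d + θ g c)` plus a sum of Stieltjes integrals
`∫_{w_k}^{w_{k+1}} (C_k - t) dg(t)`, where `C_k` is `c` plus the empirical distribution function
at `w_k`, shifted by `θ · disc [c, d]`. At both ends of a cell, `C_k - t` is a convex combination
of discrepancies of the two pieces `[c, t)` (or `[c, t]`) and the rest of `[c, d]`, hence at most
`D`, while each Stieltjes integral is at most `D` times the variation of `g` on its cell (split
`g` into monotone parts). The boundary term is paid for by the jump of `g` at `d` when `d < 1`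
(`θ = 0`), by the jump at `c` when `0 < c` (`θ = 1`), and it vanishes when `[c, d] = [0, 1]`.
-/

open MeasureTheory Set Finset

attribute [local instance] Classical.propDecidable

noncomputable section

/-- The Stieltjes integral `∫_a^b (C - t) df(t)`, written out through integration by parts. -/
def stieltjesPiece (f : ℝ → ℝ) (C a b : ℝ) : ℝ :=
  (C - b) * f b - (C - a) * f a + ∫ t in a..b, f t

section Piece

variable {f : ℝ → ℝ} {a b C K : ℝ}

theorem BoundedVariationOn.intervalIntegrable (hf : BoundedVariationOn f (Icc a b))
    (hab : a ≤ b) : IntervalIntegrable f volume a b := by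
  obtain ⟨p, q, hp, hq, rfl⟩ := hf.locallyBoundedVariationOn.exists_monotoneOn_sub_monotoneOn
  rw [← uIcc_of_le hab] at hp hq
  exact hp.intervalIntegrable.sub hq.intervalIntegrable

/-- Since `f a ≤ f ≤ f b`, the piece equals `(C - τ) (f b - f a)` for some `τ ∈ [a, b]`. -/
theorem MonotoneOn.abs_stieltjesPiece_le (hf : MonotoneOn f (Icc a b)) (hab : a ≤ b)
    (ha : |C - a| ≤ K) (hb : |C - b| ≤ K) :
    |stieltjesPiece f C a b| ≤ K * (f b - f a) := by
  have hfi : IntervalIntegrable f volume a b :=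
    (uIcc_of_le hab ▸ hf : MonotoneOn f (uIcc a b)).intervalIntegrable
  have hΔ : 0 ≤ f b - f a := sub_nonneg.2 (hf (left_mem_Icc.2 hab) (right_mem_Icc.2 hab) hab)
  have hlo : (b - a) * f a ≤ ∫ t in a..b, f t := by
    simpa using intervalIntegral.integral_mono_on hab intervalIntegrable_const hfi
      fun t ht => hf (left_mem_Icc.2 hab) ht ht.1
  have hhi : ∫ t in a..b, f t ≤ (b - a) * f b := by
    simpa using intervalIntegral.integral_mono_on hab hfi intervalIntegrable_const
      fun t ht => hf ht (right_mem_Icc.2 hab) ht.2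
  rw [abs_le] at ha hb ⊢
  unfold stieltjesPiece
  constructor <;> nlinarith

theorem BoundedVariationOn.abs_stieltjesPiece_le (hf : BoundedVariationOn f (Icc a b))
    (hab : a ≤ b) (ha : |C - a| ≤ K) (hb : |C - b| ≤ K) :
    |stieltjesPiece f C a b| ≤ K * (eVariationOn f (Icc a b)).toReal := by
  obtain ⟨p, q, hp, hq, rfl, hpq⟩ :=
    hf.locallyBoundedVariationOn.exists_monotoneOn_sub_monotoneOn'
  have hmem : a ∈ Icc a b ∧ b ∈ Icc a b := ⟨left_mem_Icc.2 hab, right_mem_Icc.2 hab⟩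
  have hsplit : stieltjesPiece (p - q) C a b = stieltjesPiece p C a b - stieltjesPiece q C a b := by
    have hpi : IntervalIntegrable p volume a b :=
      (uIcc_of_le hab ▸ hp : MonotoneOn p (uIcc a b)).intervalIntegrable
    have hqi : IntervalIntegrable q volume a b :=
      (uIcc_of_le hab ▸ hq : MonotoneOn q (uIcc a b)).intervalIntegrable
    simp only [stieltjesPiece, Pi.sub_apply, intervalIntegral.integral_sub hpi hqi]
    ring
  have hvar : (eVariationOn (p - q) (Icc a b)).toReal = (p b - p a) + (q b - q a) := by
    rw [hpq a hmem.1 b hmem.2, variationOnFromTo.eq_of_le _ _ hab, Set.inter_self]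
  rw [hsplit, hvar, mul_add]
  exact (abs_sub _ _).trans
    (add_le_add (hp.abs_stieltjesPiece_le hab ha hb) (hq.abs_stieltjesPiece_le hab ha hb))

end Piece

section Partition

variable {g : ℝ → ℝ} {w C : ℕ → ℝ} {K : ℕ}

theorem sum_stieltjesPiece (hg : ∀ k < K, IntervalIntegrable g volume (w k) (w (k + 1))) :
    ∑ k ∈ range K, stieltjesPiece g (C k) (w k) (w (k + 1)) =
      (C K - w K) * g (w K) - (C 0 - w 0) * g (w 0)
        - (∑ k ∈ range K, (C (k + 1) - C k) * g (w (k + 1))) + ∫ t in w 0..w K, g t := by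
  have hterm : ∀ k ∈ range K, stieltjesPiece g (C k) (w k) (w (k + 1)) =
      ((C (k + 1) - w (k + 1)) * g (w (k + 1)) - (C k - w k) * g (w k))
        - (C (k + 1) - C k) * g (w (k + 1)) + ∫ t in w k..w (k + 1), g t := by
    intro k _
    simp only [stieltjesPiece]
    ring
  rw [Finset.sum_congr rfl hterm, Finset.sum_add_distrib, Finset.sum_sub_distrib,
    Finset.sum_range_sub (fun k => (C k - w k) * g (w k)),
    intervalIntegral.sum_integral_adjacent_intervals hg]

/-- Abel summation over the partition `w`: the left side is
`∑ₖ ∫_{w k}^{w (k+1)} (C k - t) dg(t)`. -/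
theorem BoundedVariationOn.abs_abel_partition_le (hw : Monotone w)
    (hg : BoundedVariationOn g (Icc (w 0) (w K))) {D : ℝ}
    (hC : ∀ k < K, |C k - w k| ≤ D ∧ |C k - w (k + 1)| ≤ D) :
    |(C K - w K) * g (w K) - (C 0 - w 0) * g (w 0)
        - (∑ k ∈ range K, (C (k + 1) - C k) * g (w (k + 1))) + ∫ t in w 0..w K, g t| ≤
      D * (eVariationOn g (Icc (w 0) (w K))).toReal := by
  have hcell : ∀ k < K, Icc (w k) (w (k + 1)) ⊆ Icc (w 0) (w K) := fun k hk =>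
    Icc_subset_Icc (hw (Nat.zero_le k)) (hw hk)
  have hgk : ∀ k < K, BoundedVariationOn g (Icc (w k) (w (k + 1))) := fun k hk =>
    hg.mono (hcell k hk)
  have hfin : ∀ k ∈ range K, eVariationOn g (Icc (w k) (w (k + 1))) ≠ ⊤ := fun k hk =>
    hgk k (Finset.mem_range.1 hk)
  rw [← sum_stieltjesPiece fun k hk => (hgk k hk).intervalIntegrable (hw k.le_succ),
    ← eVariationOn.sum' g hw, ENNReal.toReal_sum hfin, Finset.mul_sum]
  refine (Finset.abs_sum_le_sum_abs _ _).trans (Finset.sum_le_sum fun k hk => ?_)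
  have hk := Finset.mem_range.1 hk
  exact (hgk k hk).abs_stieltjesPiece_le (hw k.le_succ) (hC k hk).1 (hC k hk).2

end Partition

theorem Finset.exists_monotone_enum {α β : Type*} [LinearOrder α] [AddCommMonoid β]
    (S : Finset α) {c d : α} (hc : c ∈ S) (hd : d ∈ S) (hS : ∀ t ∈ S, t ∈ Set.Icc c d) :
    ∃ (K : ℕ) (w : ℕ → α), Monotone w ∧ w 0 = c ∧ w K = d ∧
      (∀ k < K, w k < w (k + 1)) ∧ (∀ k < K, ∀ t ∈ S, t ≤ w k ∨ w (k + 1) ≤ t) ∧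
      ∀ f : α → β, ∑ t ∈ S, f t = ∑ k ∈ range (K + 1), f (w k) := by
  obtain ⟨K, hK⟩ : ∃ K, S.card = K + 1 :=
    ⟨S.card - 1, by have := Finset.card_pos.2 ⟨c, hc⟩; omega⟩
  set s := S.orderEmbOfFin hK
  let w : ℕ → α := fun k => s ⟨min k K, by omega⟩
  have hw : ∀ k (hk : k ≤ K), w k = s ⟨k, Nat.lt_succ_of_le hk⟩ := fun k hk => by
    simp [w, min_eq_left hk]
  refine ⟨K, w, fun i j hij => s.monotone (Fin.mk_le_mk.2 (min_le_min_right K hij)), ?_, ?_,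
    fun k hk => ?_, fun k hk t ht => ?_, fun f => ?_⟩
  · rw [hw 0 K.zero_le, Finset.orderEmbOfFin_zero hK K.succ_pos]
    exact le_antisymm (Finset.min'_le S c hc) (Finset.le_min' _ _ _ fun t ht => (hS t ht).1)
  · refine (hw K le_rfl).trans ((Finset.orderEmbOfFin_last hK K.succ_pos).trans ?_)
    exact le_antisymm (Finset.max'_le _ _ _ fun t ht => (hS t ht).2) (Finset.le_max' S d hd)
  · rw [hw k hk.le, hw (k + 1) hk]
    exact s.strictMono (Fin.mk_lt_mk.2 k.lt_succ_self)
  · obtain ⟨i, rfl⟩ : t ∈ Set.range s := by rwa [Finset.range_orderEmbOfFin]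
    rw [hw k hk.le, hw (k + 1) hk]
    rcases le_or_gt i ⟨k, by omega⟩ with hi | hi
    · exact Or.inl (s.monotone hi)
    · exact Or.inr (s.monotone (Fin.mk_le_mk.2 (Fin.lt_def.1 hi)))
  · rw [← Finset.map_orderEmbOfFin_univ S hK, Finset.sum_map, ← Fin.sum_univ_eq_sum_range]
    exact Finset.sum_congr rfl fun i _ => by rw [hw i (by omega)]; rfl

section Discrepancy

variable {M : ℕ} (x : Fin M → ℝ)

def empiricalFreq (I : Set ℝ) : ℝ :=
  (1 / (M : ℝ)) * ∑ m, if x m ∈ I then (1 : ℝ) else 0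

def discrepancy (I : Set ℝ) : ℝ :=
  empiricalFreq x I - (volume I).toReal

variable {x}

theorem empiricalFreq_congr {I J : Set ℝ} (h : ∀ m, x m ∈ I ↔ x m ∈ J) :
    empiricalFreq x I = empiricalFreq x J := by
  simp only [empiricalFreq, h]

theorem empiricalFreq_union {I J : Set ℝ} (h : Disjoint I J) :
    empiricalFreq x (I ∪ J) = empiricalFreq x I + empiricalFreq x J := by
  simp only [empiricalFreq, ← mul_add, ← Finset.sum_add_distrib]
  congr 1
  refine Finset.sum_congr rfl fun m _ => ?_
  by_cases hI : x m ∈ I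
  · simp [hI, Set.disjoint_left.1 h hI]
  · simp [hI]

theorem discrepancy_union {I J : Set ℝ} (h : Disjoint I J) (hJ : MeasurableSet J)
    (hIfin : volume I ≠ ⊤) (hJfin : volume J ≠ ⊤) :
    discrepancy x (I ∪ J) = discrepancy x I + discrepancy x J := by
  simp only [discrepancy, empiricalFreq_union h, measure_union h hJ,
    ENNReal.toReal_add hIfin hJfin]
  ring

theorem sum_empiricalFreq_singleton_mul {g : ℝ → ℝ} (S : Finset ℝ)
    (hS : ∀ m, x m ∉ S → g (x m) = 0) :
    ∑ t ∈ S, empiricalFreq x {t} * g t = (1 / (M : ℝ)) * ∑ m, g (x m) := by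
  have hm : ∀ m, ∑ t ∈ S, (if x m = t then g t else 0) = g (x m) := fun m => by
    rw [Finset.sum_ite_eq]
    split_ifs with h
    · rfl
    · exact (hS m h).symm
  simp only [empiricalFreq, Set.mem_singleton_iff, mul_assoc, ← Finset.mul_sum,
    Finset.sum_mul, ite_mul, one_mul, zero_mul]
  rw [Finset.sum_comm]
  simp only [hm]

theorem abs_discrepancy_sub_mul_le {I J : Set ℝ} {D θ : ℝ} (h : Disjoint I J)
    (hJ : MeasurableSet J) (hIfin : volume I ≠ ⊤) (hJfin : volume J ≠ ⊤)
    (hI : |discrepancy x I| ≤ D) (hJD : |discrepancy x J| ≤ D) (hθ0 : 0 ≤ θ) (hθ1 : θ ≤ 1) :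
    |discrepancy x I - θ * discrepancy x (I ∪ J)| ≤ D := by
  rw [discrepancy_union h hJ hIfin hJfin]
  rw [abs_le] at hI hJD ⊢
  constructor <;> nlinarith

theorem abs_discrepancy_Icc_sub_mul_le {c d D θ t : ℝ}
    (hD : ∀ I : Set ℝ, I.OrdConnected → I ⊆ Icc c d → |discrepancy x I| ≤ D) (hθ0 : 0 ≤ θ)
    (hθ1 : θ ≤ 1) (ht : t ∈ Icc c d) :
    |discrepancy x (Icc c t) - θ * discrepancy x (Icc c d)| ≤ D := by
  rw [← Icc_union_Ioc_eq_Icc ht.1 ht.2]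
  exact abs_discrepancy_sub_mul_le (Set.disjoint_left.2 fun y h1 h2 => not_lt.2 h1.2 h2.1)
    measurableSet_Ioc measure_Icc_lt_top.ne measure_Ioc_lt_top.ne
    (hD _ ordConnected_Icc (Icc_subset_Icc le_rfl ht.2))
    (hD _ ordConnected_Ioc fun y hy => ⟨ht.1.trans hy.1.le, hy.2⟩) hθ0 hθ1

theorem abs_discrepancy_Ico_sub_mul_le {c d D θ t : ℝ}
    (hD : ∀ I : Set ℝ, I.OrdConnected → I ⊆ Icc c d → |discrepancy x I| ≤ D) (hθ0 : 0 ≤ θ)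
    (hθ1 : θ ≤ 1) (ht : t ∈ Icc c d) :
    |discrepancy x (Ico c t) - θ * discrepancy x (Icc c d)| ≤ D := by
  rw [← Ico_union_Icc_eq_Icc ht.1 ht.2]
  exact abs_discrepancy_sub_mul_le (Set.disjoint_left.2 fun y h1 h2 => not_le.2 h1.2 h2.1)
    measurableSet_Icc measure_Ico_lt_top.ne measure_Icc_lt_top.ne
    (hD _ ordConnected_Ico fun y hy => ⟨hy.1, hy.2.le.trans ht.2⟩)
    (hD _ ordConnected_Icc (Icc_subset_Icc ht.1 le_rfl)) hθ0 hθ1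

theorem discrepancy_Icc_self (c : ℝ) : discrepancy x (Icc c c) = empiricalFreq x {c} := by
  simp [discrepancy]

theorem discrepancy_Icc_zero_one (hM : M ≠ 0) (hx : ∀ m, x m ∈ Icc (0 : ℝ) 1) :
    discrepancy x (Icc 0 1) = 0 := by
  simp [discrepancy, empiricalFreq, hx, hM]

theorem exists_partition_through_samples (x : Fin M → ℝ) {c d : ℝ} (hcd : c ≤ d) :
    ∃ (K : ℕ) (w : ℕ → ℝ), Monotone w ∧ w 0 = c ∧ w K = d ∧
      (∀ k < K, empiricalFreq x (Ico c (w (k + 1))) = empiricalFreq x (Icc c (w k))) ∧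
      ∀ g : ℝ → ℝ, (∀ y, y ∉ Icc c d → g y = 0) →
        ∑ k ∈ range (K + 1), empiricalFreq x {w k} * g (w k) = (1 / (M : ℝ)) * ∑ m, g (x m) := by
  set S : Finset ℝ := insert c (insert d ((Finset.univ.image x).filter (· ∈ Icc c d)))
  have hS : ∀ t ∈ S, t ∈ Icc c d := by
    simp only [S, Finset.mem_insert, Finset.mem_filter]
    rintro t (rfl | rfl | ⟨-, ht⟩)
    exacts [left_mem_Icc.2 hcd, right_mem_Icc.2 hcd, ht]
  have hxS : ∀ m, x m ∈ Icc c d → x m ∈ S := fun m hm => by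
    simp only [S, Finset.mem_insert, Finset.mem_filter, Finset.mem_image]
    exact Or.inr (Or.inr ⟨⟨m, Finset.mem_univ _, rfl⟩, hm⟩)
  obtain ⟨K, w, hw, hw0, hwK, hlt, hgap, hsum⟩ :=
    S.exists_monotone_enum (β := ℝ) (by simp [S]) (by simp [S]) hS
  refine ⟨K, w, hw, hw0, hwK, fun k hk => ?_, fun g hvanish => ?_⟩
  · refine empiricalFreq_congr fun m => ⟨fun ⟨h1, h2⟩ => ?_, fun ⟨h1, h2⟩ =>
      ⟨h1, h2.trans_lt (hlt k hk)⟩⟩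
    have hm : x m ∈ Icc c d := ⟨h1, h2.le.trans (hwK ▸ hw hk)⟩
    exact ⟨h1, (hgap k hk _ (hxS m hm)).resolve_right (not_le.2 h2)⟩
  · rw [← hsum fun t => empiricalFreq x {t} * g t,
      sum_empiricalFreq_singleton_mul S fun m hm => hvanish _ fun h => hm (hxS m h)]

theorem abs_mean_sub_integral_sub_discrepancy_le {g : ℝ → ℝ} {c d D θ : ℝ} (hθ0 : 0 ≤ θ)
    (hθ1 : θ ≤ 1) (hcd : c ≤ d) (hg : BoundedVariationOn g (Icc c d))
    (hvanish : ∀ y, y ∉ Icc c d → g y = 0)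
    (hD : ∀ I : Set ℝ, I.OrdConnected → I ⊆ Icc c d → |discrepancy x I| ≤ D) :
    |(1 / (M : ℝ)) * (∑ m, g (x m)) - (∫ t in c..d, g t)
        - discrepancy x (Icc c d) * ((1 - θ) * g d + θ * g c)| ≤
      D * (eVariationOn g (Icc c d)).toReal := by
  obtain ⟨K, w, hw, hw0, hwK, hfreq_gap, hmean⟩ := exists_partition_through_samples x hcd
  have hwmem : ∀ k ≤ K, w k ∈ Icc c d := fun k hk => ⟨hw0 ▸ hw k.zero_le, hwK ▸ hw hk⟩
  obtain ⟨ν, hν⟩ : ∃ ν, ν = discrepancy x (Icc c d) := ⟨_, rfl⟩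
  rw [← hν]
  set C : ℕ → ℝ := fun k => c + empiricalFreq x (Icc c (w k)) - θ * ν with hC
  have hCw : ∀ k ≤ K, C k - w k = discrepancy x (Icc c (w k)) - θ * ν := fun k hk => by
    simp only [hC, discrepancy, Real.volume_Icc,
      ENNReal.toReal_ofReal (sub_nonneg.2 (hwmem k hk).1)]
    ring
  have hCw' : ∀ k < K, C k - w (k + 1) = discrepancy x (Ico c (w (k + 1))) - θ * ν :=
    fun k hk => by
      simp only [hC, discrepancy, hfreq_gap k hk, Real.volume_Ico,
        ENNReal.toReal_ofReal (sub_nonneg.2 (hwmem (k + 1) hk).1)]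
      ring
  have hbound : ∀ k < K, |C k - w k| ≤ D ∧ |C k - w (k + 1)| ≤ D := fun k hk => by
    rw [hCw k hk.le, hCw' k hk, hν]
    exact ⟨abs_discrepancy_Icc_sub_mul_le hD hθ0 hθ1 (hwmem k hk.le),
      abs_discrepancy_Ico_sub_mul_le hD hθ0 hθ1 (hwmem (k + 1) hk)⟩
  have hstep : ∀ k < K, C (k + 1) - C k = empiricalFreq x {w (k + 1)} := fun k hk => by
    have hnot : w (k + 1) ∉ Ico c (w (k + 1)) := fun h => lt_irrefl _ h.2
    simp only [hC, ← hfreq_gap k hk, ← Ico_insert_right (hwmem (k + 1) hk).1, Set.insert_eq,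
      empiricalFreq_union (Set.disjoint_singleton_left.2 hnot)]
    ring
  have hsum : (∑ k ∈ Finset.range K, (C (k + 1) - C k) * g (w (k + 1)))
      + empiricalFreq x {c} * g c = (1 / (M : ℝ)) * ∑ m, g (x m) := by
    rw [← hmean g hvanish, Finset.sum_range_succ', hw0]
    exact congrArg (· + _) (Finset.sum_congr rfl fun k hk => by
      rw [hstep k (Finset.mem_range.1 hk)])
  have key := (hw0 ▸ hwK ▸ hg).abs_abel_partition_le hw hbound
  rw [hCw K le_rfl, hCw 0 K.zero_le, hw0, hwK, discrepancy_Icc_self, ← hν] at key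
  refine le_of_eq_of_le ?_ key
  rw [← abs_neg]
  congr 1
  linear_combination hsum

end Discrepancy

theorem BoundedVariationOn.abs_sub_add_eVariationOn_add_abs_sub_le {g : ℝ → ℝ} {a b c d : ℝ}
    (hg : BoundedVariationOn g (Icc a b)) (hac : a ≤ c) (hcd : c ≤ d) (hdb : d ≤ b) :
    |g c - g a| + (eVariationOn g (Icc c d)).toReal + |g b - g d| ≤
      (eVariationOn g (Icc a b)).toReal := by
  have hsplit : eVariationOn g (Icc a c) + eVariationOn g (Icc c d) + eVariationOn g (Icc d b) =
      eVariationOn g (Icc a b) := by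
    have h₁ := eVariationOn.Icc_add_Icc g (s := univ) hac hcd (mem_univ c)
    have h₂ := eVariationOn.Icc_add_Icc g (s := univ) (hac.trans hcd) hdb (mem_univ d)
    simp only [univ_inter] at h₁ h₂
    rw [h₁, h₂]
  have hfin : ∀ {u v}, a ≤ u → v ≤ b → eVariationOn g (Icc u v) ≠ ⊤ := fun hu hv =>
    hg.mono (Icc_subset_Icc hu hv)
  have hend : ∀ {u v}, u ≤ v → a ≤ u → v ≤ b → |g v - g u| ≤ (eVariationOn g (Icc u v)).toReal :=
    fun huv hu hv => by
      rw [← Real.dist_eq, dist_edist]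
      exact ENNReal.toReal_mono (hfin hu hv)
        (eVariationOn.edist_le g (right_mem_Icc.2 huv) (left_mem_Icc.2 huv))
  rw [← hsplit,
    ENNReal.toReal_add (ENNReal.add_ne_top.2 ⟨hfin le_rfl (hcd.trans hdb), hfin hac hdb⟩)
      (hfin (hac.trans hcd) le_rfl),
    ENNReal.toReal_add (hfin le_rfl (hcd.trans hdb)) (hfin hac hdb)]
  linarith [hend hac le_rfl (hcd.trans hdb), hend hdb (hac.trans hcd) le_rfl]

theorem intervalIntegral.integral_eq_of_eq_zero_off_Icc {g : ℝ → ℝ} {a b c d : ℝ}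
    (hg : IntervalIntegrable g volume a b) (hac : a ≤ c) (hcd : c ≤ d) (hdb : d ≤ b)
    (hvanish : ∀ y, y ∉ Icc c d → g y = 0) :
    ∫ t in a..b, g t = ∫ t in c..d, g t := by
  have hsub : ∀ {u v}, a ≤ u → u ≤ v → v ≤ b → IntervalIntegrable g volume u v :=
    fun hu huv hv => hg.mono_set <| by
      rw [uIcc_of_le (hac.trans (hcd.trans hdb)), uIcc_of_le huv]
      exact Icc_subset_Icc hu hv
  have hleft : ∫ t in a..c, g t = 0 := by
    rw [intervalIntegral.integral_of_le hac, integral_Ioc_eq_integral_Ioo]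
    exact setIntegral_eq_zero_of_forall_eq_zero fun t ht => hvanish t fun h => (not_le.2 ht.2) h.1
  have hright : ∫ t in d..b, g t = 0 := by
    rw [intervalIntegral.integral_of_le hdb]
    exact setIntegral_eq_zero_of_forall_eq_zero fun t ht => hvanish t fun h => (not_le.2 ht.1) h.2
  rw [← intervalIntegral.integral_add_adjacent_intervals (hsub le_rfl hac (hcd.trans hdb))
      (hsub hac (hcd.trans hdb) le_rfl),
    ← intervalIntegral.integral_add_adjacent_intervals (hsub hac hcd hdb)
      (hsub (hac.trans hcd) hdb le_rfl), hleft, hright, zero_add, add_zero]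

theorem exists_boundary_weight_le {M : ℕ} {x : Fin M → ℝ} {g : ℝ → ℝ} {c d D : ℝ}
    (hM : M ≠ 0) (hx : ∀ m, x m ∈ Icc (0 : ℝ) 1) (hc : 0 ≤ c) (hcd : c ≤ d) (hd : d ≤ 1)
    (hbv : BoundedVariationOn g (Icc 0 1)) (hvanish : ∀ y, y ∉ Icc c d → g y = 0)
    (hD0 : 0 ≤ D) (hν : |discrepancy x (Icc c d)| ≤ D) :
    ∃ θ : ℝ, 0 ≤ θ ∧ θ ≤ 1 ∧
      |discrepancy x (Icc c d) * ((1 - θ) * g d + θ * g c)| +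
          D * (eVariationOn g (Icc c d)).toReal ≤
        (eVariationOn g (Icc 0 1)).toReal * D := by
  have hbudget := hbv.abs_sub_add_eVariationOn_add_abs_sub_le hc hcd hd
  rcases hd.lt_or_eq with hd1 | rfl
  · have hg1 : g 1 = 0 := hvanish 1 fun h => (not_le.2 hd1) h.2
    refine ⟨0, le_rfl, zero_le_one, ?_⟩
    rw [hg1, zero_sub, abs_neg] at hbudget
    simp only [sub_zero, one_mul, zero_mul, add_zero, abs_mul]
    nlinarith [mul_le_mul_of_nonneg_right hν (abs_nonneg (g d)),
      mul_le_mul_of_nonneg_left hbudget hD0, mul_nonneg hD0 (abs_nonneg (g c - g 0))]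
  · refine ⟨1, zero_le_one, le_rfl, ?_⟩
    simp only [sub_self, zero_mul, one_mul, zero_add, abs_mul]
    rcases hc.lt_or_eq with hc0 | rfl
    · have hg0 : g 0 = 0 := hvanish 0 fun h => (not_le.2 hc0) h.1
      rw [hg0, sub_zero, sub_self, abs_zero, add_zero] at hbudget
      nlinarith [mul_le_mul_of_nonneg_right hν (abs_nonneg (g c)),
        mul_le_mul_of_nonneg_left hbudget hD0]
    · rw [discrepancy_Icc_zero_one hM hx, abs_zero, zero_mul, zero_add, mul_comm]

theorem stmt9 (M : ℕ) (hM : 1 ≤ M) (x : Fin M → ℝ)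
    (hx : ∀ m, x m ∈ Set.Icc (0 : ℝ) 1)
    (g : ℝ → ℝ) (c d : ℝ) (hc : 0 ≤ c) (hcd : c ≤ d) (hd : d ≤ 1)
    (hbv : BoundedVariationOn g (Set.Icc 0 1))
    (hvanish : ∀ y, y ∉ Set.Icc c d → g y = 0)
    (D : ℝ)
    (hD : ∀ I : Set ℝ, I.OrdConnected → I ⊆ Set.Icc c d →
      |(1 / (M : ℝ)) * (∑ m, if x m ∈ I then (1 : ℝ) else 0) - (volume I).toReal| ≤ D) :
    |(1 / (M : ℝ)) * (∑ m, g (x m)) - ∫ y in (0 : ℝ)..1, g y| ≤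
      (eVariationOn g (Set.Icc 0 1)).toReal * D := by
  have hD0 : 0 ≤ D := by simpa using hD ∅ ordConnected_empty (empty_subset _)
  obtain ⟨θ, hθ0, hθ1, hcharge⟩ := exists_boundary_weight_le (by omega) hx hc hcd hd hbv hvanish
    hD0 (hD _ ordConnected_Icc subset_rfl)
  have hkoksma := abs_mean_sub_integral_sub_discrepancy_le (x := x) hθ0 hθ1 hcd
    (hbv.mono (Icc_subset_Icc hc hd)) hvanish hD
  rw [intervalIntegral.integral_eq_of_eq_zero_off_Icc (hbv.intervalIntegrable zero_le_one)
    hc hcd hd hvanish]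
  linarith [(abs_sub_abs_le_abs_sub _ _).trans hkoksma]
end
end

section
/- Let N ≥ 3 be an integer and let a ∈ Z_N^* with a ≤ N/2 and canonical continued fraction expansion a/N = [0; a_1, …, a_r] (so that a_1 ≥ 2). Define a* ∈ Z_N^* by a*/N = [0; a_r, a_{r−1}, …, a_1]. Then: (i) the map a ↦ a* is a bijection from { a ∈ Z_N^* : a ≤ N/2 } onto itself; and (ii) with q_i(a/N) and q_i(a*/N) denoting the convergent denominators of a/N and a*/N respectively, and with the convention q_{−1} = 0, one has q_i(a/N) · q_{r−i}(a*/N) + q_{i−1}(a/N) · q_{r−i−1}(a*/N) = N for all 1 ≤ i ≤ r. -/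
open scoped BigOperators
open MeasureTheory

attribute [local instance] Classical.propDecidable

noncomputable section

/-- Value of the continued fraction `[0; a_1, ..., a_r]` given by the list `[a_1, ..., a_r]`. -/
def cfValQ : List ℕ → ℚ
  | [] => 0
  | a :: l => 1 / ((a : ℚ) + cfValQ l)

/-- `l` is the canonical continued fraction expansion of `q`: all partial quotients are
positive, the last one is `> 1`, and the value is `q`. -/
def IsCF (q : ℚ) (l : List ℕ) : Prop :=
  (∀ x ∈ l, 1 ≤ x) ∧ (∀ x, l.getLast? = some x → 2 ≤ x) ∧ cfValQ l = q

/-- The canonical continued fraction expansion `[a_1, ..., a_r]` of a rational `q`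
(the empty list if none exists). -/
def cfList (q : ℚ) : List ℕ :=
  if h : ∃ l, IsCF q l then h.choose else []

/-- `Z_N^*`: the integers `1 ≤ a ≤ N` coprime with `N`. -/
def Zstar (N : ℕ) : Finset ℕ := (Finset.Icc 1 N).filter fun a => Nat.Coprime a N

/-- The convergent denominator `q_i` of the continued fraction given by the list
`[a_1, ..., a_i]` (via the recursion `q_{-1} = 0`, `q_0 = 1`, `q_i = a_i q_{i-1} + q_{i-2}`). -/
def convDen (l : List ℕ) : ℕ :=
  (l.foldl (fun pr a => (a * pr.1 + pr.2, pr.1)) ((1 : ℕ), (0 : ℕ))).1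

/-- `q_j` for a continued fraction list `l`, with integer index `j` and the convention
`q_j = 0` for `j < 0` (in particular `q_{-1} = 0`). -/
def qdenZ (l : List ℕ) (j : ℤ) : ℤ :=
  if j < 0 then 0 else (convDen (l.take j.toNat) : ℤ)

/-- The map `a ↦ a*`, where `a*/N = [0; a_r, ..., a_1]` is obtained by reversing the
continued fraction expansion `a/N = [0; a_1, ..., a_r]`. -/
def starMap (N a : ℕ) : ℕ :=
  (((N : ℚ) * cfValQ ((cfList ((a : ℚ) / N)).reverse)).num).toNat


/-!
The continuant matrix `contMat l = ∏ !![a_i, 1; 1, 0]` of `l = [a_1, …, a_r]` equals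
`!![q_r, q_{r-1}; p_r, p_{r-1}]`, and its determinant `±1` makes `q_r` coprime to `p_r` and to
`q_{r-1}`. For the canonical expansion `l` of a reduced fraction `a / N` this forces `q_r = N` and
`p_r = a`. Every factor is symmetric, so reversing `l` transposes the matrix: `[0; a_r, …, a_1]`
has value `q_{r-1} / N`, that is `a* = q_{r-1}`, and reversing twice gives back `p_r = a`. The
condition `2 a ≤ N` is `a_1 ≥ 2`, which makes the reversed expansion canonical, and `a_r ≥ 2`
gives `2 a* ≤ N`. The identity (ii) is the `(0, 0)` entry of
`contMat l = contMat [a_1, …, a_i] * contMat [a_{i+1}, …, a_r]`.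
-/

open Matrix

def cfMat (a : ℕ) : Matrix (Fin 2) (Fin 2) ℕ := !![a, 1; 1, 0]

def contMat (l : List ℕ) : Matrix (Fin 2) (Fin 2) ℕ := (l.map cfMat).prod

@[simp] lemma contMat_nil : contMat [] = 1 := rfl

lemma contMat_append (l l' : List ℕ) : contMat (l ++ l') = contMat l * contMat l' := by
  simp [contMat]

lemma contMat_cons (a : ℕ) (l : List ℕ) :
    contMat (a :: l) = !![a * contMat l 0 0 + contMat l 1 0, a * contMat l 0 1 + contMat l 1 1;
      contMat l 0 0, contMat l 0 1] := by
  rw [show a :: l = [a] ++ l from rfl, contMat_append, eta_fin_two (contMat l)]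
  simp [contMat, cfMat]

lemma contMat_concat (l : List ℕ) (a : ℕ) :
    contMat (l ++ [a]) = !![a * contMat l 0 0 + contMat l 0 1, contMat l 0 0;
      a * contMat l 1 0 + contMat l 1 1, contMat l 1 0] := by
  rw [contMat_append, eta_fin_two (contMat l)]
  simp [contMat, cfMat, mul_comm]

lemma contMat_reverse (l : List ℕ) : contMat l.reverse = (contMat l)ᵀ := by
  have hsymm : ∀ a, (cfMat a)ᵀ = cfMat a := fun a => by
    ext i j; fin_cases i <;> fin_cases j <;> rfl
  rw [contMat, contMat, transpose_list_prod, List.map_map, List.map_reverse]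
  simp [Function.comp_def, hsymm]

lemma contMat_det (l : List ℕ) :
    (contMat l 0 0 : ℤ) * contMat l 1 1 - contMat l 0 1 * contMat l 1 0 = (-1) ^ l.length := by
  induction l with
  | nil => simp
  | cons a l ih =>
    simp only [contMat_cons, of_apply, cons_val', cons_val_zero, cons_val_one, empty_val',
      cons_val_fin_one, List.length_cons, pow_succ]
    push_cast
    linear_combination (-1 : ℤ) * ih

lemma convDen_eq_contMat (l : List ℕ) : convDen l = contMat l 0 0 := by
  suffices l.foldl (fun pr a => (a * pr.1 + pr.2, pr.1)) (1, 0) = (contMat l 0 0, contMat l 0 1) by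
    rw [convDen, this]
  induction l using List.reverseRecOn with
  | nil => simp
  | append_singleton l a ih => simp [List.foldl_append, ih, contMat_concat]

lemma isCoprime_contMat (l : List ℕ) : IsCoprime (contMat l 0 0 : ℤ) (contMat l 1 0) :=
  ⟨(-1) ^ l.length * contMat l 1 1, -(-1) ^ l.length * contMat l 0 1, by
    have hsq : ((-1 : ℤ) ^ l.length) ^ 2 = 1 := by rw [← pow_mul, pow_mul']; norm_num
    linear_combination (-1 : ℤ) ^ l.length * contMat_det l + hsq⟩

lemma one_le_contMat (l : List ℕ) (hl : ∀ x ∈ l, 1 ≤ x) : 1 ≤ contMat l 0 0 := by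
  induction l with
  | nil => simp
  | cons a l ih =>
    have ha := hl a List.mem_cons_self
    have := ih fun x hx => hl x (List.mem_cons_of_mem a hx)
    simp only [contMat_cons, of_apply, cons_val', cons_val_zero, empty_val', cons_val_fin_one]
    nlinarith

lemma cfValQ_eq_contMat (l : List ℕ) (hl : ∀ x ∈ l, 1 ≤ x) :
    cfValQ l = contMat l 1 0 / contMat l 0 0 := by
  induction l with
  | nil => simp [cfValQ]
  | cons a l ih =>
    have hpos : (0 : ℚ) < contMat l 0 0 := by
      exact_mod_cast one_le_contMat l fun x hx => hl x (List.mem_cons_of_mem a hx)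
    rw [cfValQ, ih fun x hx => hl x (List.mem_cons_of_mem a hx)]
    simp only [contMat_cons, of_apply, cons_val', cons_val_zero, cons_val_one, empty_val',
      cons_val_fin_one]
    push_cast
    field_simp

lemma cfValQ_nonneg (l : List ℕ) : 0 ≤ cfValQ l := by
  induction l with
  | nil => simp [cfValQ]
  | cons a l ih => rw [cfValQ]; positivity

lemma cfValQ_pos (l : List ℕ) (hl : ∀ x ∈ l, 1 ≤ x) (hne : l ≠ []) : 0 < cfValQ l := by
  obtain ⟨a, t, rfl⟩ := List.exists_cons_of_ne_nil hne
  have ha : (1 : ℚ) ≤ a := by exact_mod_cast hl a List.mem_cons_self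
  rw [cfValQ]
  have := cfValQ_nonneg t
  positivity

lemma one_le_contMat_zero_one {l : List ℕ} (hl : ∀ x ∈ l, 1 ≤ x) (hne : l ≠ []) :
    1 ≤ contMat l 0 1 := by
  rw [← List.dropLast_append_getLast hne, contMat_concat]
  exact one_le_contMat _ fun x hx => hl x (List.mem_of_mem_dropLast hx)

lemma two_mul_contMat_zero_one_le {l : List ℕ} (hlast : ∀ x, l.getLast? = some x → 2 ≤ x) :
    2 * contMat l 0 1 ≤ contMat l 0 0 := by
  rcases eq_or_ne l [] with rfl | hne
  · simp
  have := hlast _ (List.getLast?_eq_some_getLast hne)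
  rw [← List.dropLast_append_getLast hne, contMat_concat]
  simp only [of_apply, cons_val', cons_val_zero, cons_val_one, empty_val', cons_val_fin_one]
  nlinarith

namespace IsCF

variable {q : ℚ} {a : ℕ} {l : List ℕ}

lemma tail (h : IsCF q (a :: l)) : IsCF (cfValQ l) l := by
  obtain ⟨hpos, hlast, -⟩ := h
  refine ⟨fun x hx => hpos x (List.mem_cons_of_mem a hx), fun x hx => hlast x ?_, rfl⟩
  cases l with
  | nil => simp at hx
  | cons b t => rwa [List.getLast?_cons_cons]

lemma lt_one (h : IsCF q l) : q < 1 := by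
  obtain ⟨hpos, hlast, rfl⟩ := h
  cases l with
  | nil => simp [cfValQ]
  | cons a t =>
    have ha := hpos a List.mem_cons_self
    rw [cfValQ, div_lt_one (by have := cfValQ_nonneg t; positivity)]
    rcases eq_or_ne t [] with rfl | hne
    · have := hlast a rfl
      simp only [cfValQ, add_zero]
      exact_mod_cast this
    · have := cfValQ_pos t (fun x hx => hpos x (List.mem_cons_of_mem a hx)) hne
      have : (1 : ℚ) ≤ a := by exact_mod_cast ha
      linarith

lemma floor_inv_eq (h : IsCF q (a :: l)) : ⌊1 / q⌋ = a := by
  have hl := h.tail.lt_one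
  rw [← h.2.2, cfValQ, one_div_one_div, Int.floor_eq_iff]
  have := cfValQ_nonneg l
  constructor <;> push_cast <;> linarith

lemma pos (h : IsCF q (a :: l)) : 0 < q := h.2.2 ▸ cfValQ_pos _ h.1 (List.cons_ne_nil a l)

lemma unique {l' : List ℕ} (h : IsCF q l) (h' : IsCF q l') : l = l' := by
  induction l generalizing q l' with
  | nil =>
    cases l' with
    | nil => rfl
    | cons b t => exact absurd (h.2.2 ▸ h'.pos) (by simp [cfValQ])
  | cons a l ih =>
    cases l' with
    | nil => exact absurd (h'.2.2 ▸ h.pos) (by simp [cfValQ])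
    | cons b t =>
      have hab : a = b := by exact_mod_cast h.floor_inv_eq.symm.trans h'.floor_inv_eq
      subst hab
      have hval : cfValQ l = cfValQ t := by
        have := h.2.2.trans h'.2.2.symm
        simpa only [cfValQ, one_div, _root_.inv_inj, add_right_inj] using this
      rw [ih h.tail (hval ▸ h'.tail)]

lemma contMat_eq {N : ℕ} (h : IsCF (a / N) l) (hN : 0 < N) (hco : a.Coprime N) :
    contMat l 0 0 = N ∧ contMat l 1 0 = a := by
  have hval : ((contMat l 1 0 : ℤ) : ℚ) / (contMat l 0 0 : ℤ) = ((a : ℤ) : ℚ) / (N : ℤ) := by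
    push_cast
    rw [← cfValQ_eq_contMat l h.1, h.2.2]
  have hcop := (Nat.isCoprime_iff_coprime.1 (isCoprime_contMat l)).symm
  obtain ⟨h10, h00⟩ := Rat.div_int_inj (by exact_mod_cast one_le_contMat l h.1)
    (by exact_mod_cast hN) (by simpa using hcop) (by simpa using hco) hval
  exact ⟨by exact_mod_cast h00, by exact_mod_cast h10⟩

lemma two_le_head {x : ℕ} {t : List ℕ} (h : IsCF q (x :: t)) (hq : q ≤ 1 / 2) : 2 ≤ x := by
  by_contra! hx
  obtain rfl : x = 1 := by have := h.1 x List.mem_cons_self; omega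
  have ht := h.tail.lt_one
  rw [← h.2.2, cfValQ, div_le_div_iff₀ (by have := cfValQ_nonneg t; positivity) two_pos] at hq
  push_cast at hq
  linarith

lemma reverse (h : IsCF q l) (hhead : ∀ x, l.head? = some x → 2 ≤ x) :
    IsCF (contMat l 0 1 / contMat l 0 0) l.reverse := by
  refine ⟨fun x hx => h.1 x (List.mem_reverse.1 hx), fun x hx => hhead x ?_, ?_⟩
  · rwa [List.getLast?_reverse] at hx
  · rw [cfValQ_eq_contMat _ fun x hx => h.1 x (List.mem_reverse.1 hx), contMat_reverse]
    rfl

end IsCF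

lemma cfList_eq {q : ℚ} {l : List ℕ} (h : IsCF q l) : cfList q = l := by
  have hex : ∃ l, IsCF q l := ⟨l, h⟩
  rw [cfList, dif_pos hex]
  exact hex.choose_spec.unique h

-- The Euclidean step `b = (b / a) * a + b % a`, read as `a / b = 1 / (b / a + (b % a) / a)`.
lemma exists_isCF_div {a b : ℕ} (ha : 0 < a) (hab : a < b) : ∃ l, IsCF ((a : ℚ) / b) l := by
  induction a using Nat.strong_induction_on generalizing b with
  | _ a ih =>
  have hq : 1 ≤ b / a := (Nat.one_le_div_iff ha).2 hab.le
  have hval : 1 / ((b / a : ℕ) + ((b % a : ℕ) : ℚ) / a) = (a : ℚ) / b := by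
    have hb : ((b / a : ℕ) : ℚ) * a + (b % a : ℕ) = b := by exact_mod_cast Nat.div_add_mod' b a
    rw [← hb]
    field_simp
  rcases Nat.eq_zero_or_pos (b % a) with hr | hr
  · refine ⟨[b / a], by simpa using hq, fun x hx => ?_, ?_⟩
    · obtain rfl : b / a = x := by simpa using hx
      by_contra! hlt
      have := Nat.div_add_mod b a
      rw [hr, show b / a = 1 by omega] at this
      omega
    · simpa [cfValQ, hr] using hval
  · obtain ⟨l, hpos, hlast, hl⟩ := ih (b % a) (Nat.mod_lt b ha) hr (Nat.mod_lt b ha)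
    refine ⟨b / a :: l, ?_, ?_, ?_⟩
    · simpa [hq] using hpos
    · obtain ⟨c, t, rfl⟩ : ∃ c t, l = c :: t := by
        refine List.exists_cons_of_ne_nil fun hnil => ?_
        subst hnil
        simp [cfValQ, eq_comm, hr.ne', ha.ne'] at hl
      simpa using hlast
    · rw [cfValQ, hl, hval]

lemma isCF_cfList {a b : ℕ} (ha : 0 < a) (hab : a < b) : IsCF ((a : ℚ) / b) (cfList (a / b)) := by
  obtain ⟨l, hl⟩ := exists_isCF_div ha hab
  rwa [cfList_eq hl]

lemma mem_Zstar {N a : ℕ} : a ∈ Zstar N ↔ (1 ≤ a ∧ a ≤ N) ∧ a.Coprime N := by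
  simp [Zstar]

section starMap

variable {N a : ℕ}

lemma pos_lt_of_mem_Zstar (ha : a ∈ Zstar N) (h2a : 2 * a ≤ N) : 0 < a ∧ a < N := by
  have := mem_Zstar.1 ha
  omega

lemma isCF_cfList_of_mem_Zstar (ha : a ∈ Zstar N) (h2a : 2 * a ≤ N) :
    IsCF (a / N) (cfList (a / N)) :=
  isCF_cfList (pos_lt_of_mem_Zstar ha h2a).1 (pos_lt_of_mem_Zstar ha h2a).2

lemma contMat_cfList (ha : a ∈ Zstar N) (h2a : 2 * a ≤ N) :
    contMat (cfList (a / N)) 0 0 = N ∧ contMat (cfList (a / N)) 1 0 = a :=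
  (isCF_cfList_of_mem_Zstar ha h2a).contMat_eq (by have := pos_lt_of_mem_Zstar ha h2a; omega)
    (mem_Zstar.1 ha).2

lemma two_le_head_cfList (ha : a ∈ Zstar N) (h2a : 2 * a ≤ N) :
    ∀ x, (cfList (a / N)).head? = some x → 2 ≤ x := by
  intro x hx
  obtain ⟨t, ht⟩ := List.head?_eq_some_iff.1 hx
  have hcf := isCF_cfList_of_mem_Zstar ha h2a
  rw [ht] at hcf
  refine hcf.two_le_head ?_
  have hN : (0 : ℚ) < N := by exact_mod_cast (by have := pos_lt_of_mem_Zstar ha h2a; omega)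
  rw [div_le_div_iff₀ hN two_pos]
  exact_mod_cast (by omega : a * 2 ≤ 1 * N)

lemma starMap_eq (ha : a ∈ Zstar N) (h2a : 2 * a ≤ N) :
    starMap N a = contMat (cfList (a / N)) 0 1 := by
  have hcf := (isCF_cfList_of_mem_Zstar ha h2a).reverse (two_le_head_cfList ha h2a)
  have hN : (N : ℚ) ≠ 0 := by exact_mod_cast (by have := pos_lt_of_mem_Zstar ha h2a; omega)
  rw [starMap, hcf.2.2, (contMat_cfList ha h2a).1, mul_div_cancel₀ _ hN, Rat.num_natCast,
    Int.toNat_natCast]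

lemma isCF_starMap_div (ha : a ∈ Zstar N) (h2a : 2 * a ≤ N) :
    IsCF (starMap N a / N) (cfList (a / N)).reverse := by
  have hcf := (isCF_cfList_of_mem_Zstar ha h2a).reverse (two_le_head_cfList ha h2a)
  rwa [(contMat_cfList ha h2a).1, ← starMap_eq ha h2a] at hcf

lemma starMap_mem (ha : a ∈ Zstar N) (h2a : 2 * a ≤ N) :
    starMap N a ∈ Zstar N ∧ 2 * starMap N a ≤ N := by
  have hcf := isCF_cfList_of_mem_Zstar ha h2a
  have hne : cfList (a / N) ≠ [] := fun h => by
    have hval := hcf.2.2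
    rw [h, cfValQ, eq_comm, div_eq_zero_iff] at hval
    have := pos_lt_of_mem_Zstar ha h2a
    exact hval.elim (by exact_mod_cast this.1.ne') (by exact_mod_cast (by omega : N ≠ 0))
  have hcop := Nat.isCoprime_iff_coprime.1 (isCoprime_contMat (cfList (a / N)).reverse)
  rw [contMat_reverse, transpose_apply, transpose_apply] at hcop
  have hle := two_mul_contMat_zero_one_le hcf.2.1
  rw [(contMat_cfList ha h2a).1] at hcop hle
  rw [starMap_eq ha h2a, mem_Zstar]
  exact ⟨⟨⟨one_le_contMat_zero_one hcf.1 hne, by omega⟩, hcop.symm⟩, hle⟩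

lemma starMap_starMap (ha : a ∈ Zstar N) (h2a : 2 * a ≤ N) :
    starMap N (starMap N a) = a := by
  obtain ⟨hmem, h2⟩ := starMap_mem ha h2a
  rw [starMap_eq hmem h2, cfList_eq (isCF_starMap_div ha h2a), contMat_reverse, transpose_apply,
    (contMat_cfList ha h2a).2]

end starMap

lemma qdenZ_natCast (l : List ℕ) (n : ℕ) : qdenZ l n = contMat (l.take n) 0 0 := by
  simp [qdenZ, convDen_eq_contMat]

lemma qdenZ_natCast_sub_one {l : List ℕ} {n : ℕ} (hn : n ≤ l.length) :
    qdenZ l (n - 1) = contMat (l.take n) 0 1 := by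
  cases n with
  | zero => simp [qdenZ]
  | succ m =>
    rw [Nat.cast_succ, add_sub_cancel_right, qdenZ_natCast, List.take_add_one,
      List.getElem?_eq_getElem hn, Option.toList_some, contMat_concat]
    rfl

theorem qdenZ_mul_qdenZ_reverse_add (l : List ℕ) {i : ℤ} (h0 : 0 ≤ i) (hi : i ≤ l.length) :
    qdenZ l i * qdenZ l.reverse (l.length - i) +
      qdenZ l (i - 1) * qdenZ l.reverse (l.length - i - 1) = convDen l := by
  lift i to ℕ using h0
  have hi' : i ≤ l.length := by exact_mod_cast hi
  have hrev : l.reverse.take (l.length - i) = (l.drop i).reverse := by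
    rw [List.take_reverse, Nat.sub_sub_self hi']
  rw [show (l.length : ℤ) - i = ((l.length - i : ℕ) : ℤ) by omega, qdenZ_natCast, qdenZ_natCast,
    qdenZ_natCast_sub_one hi', qdenZ_natCast_sub_one (by simp), hrev, contMat_reverse,
    convDen_eq_contMat]
  conv_rhs => rw [← List.take_append_drop i l, contMat_append]
  simp [Matrix.mul_apply, Fin.sum_univ_two]

theorem stmt18_general (N : ℕ) :
    (∀ a, a ∈ Zstar N → 2 * a ≤ N →
        ((starMap N a : ℚ) / N = cfValQ ((cfList ((a : ℚ) / N)).reverse))) ∧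
    Set.BijOn (starMap N) {a | a ∈ Zstar N ∧ 2 * a ≤ N} {a | a ∈ Zstar N ∧ 2 * a ≤ N} ∧
    (∀ a, a ∈ Zstar N → 2 * a ≤ N →
      ∀ i : ℤ, 1 ≤ i → i ≤ ((cfList ((a : ℚ) / N)).length : ℤ) →
        qdenZ (cfList ((a : ℚ) / N)) i *
            qdenZ (cfList ((starMap N a : ℚ) / N)) (((cfList ((a : ℚ) / N)).length : ℤ) - i) +
          qdenZ (cfList ((a : ℚ) / N)) (i - 1) *
            qdenZ (cfList ((starMap N a : ℚ) / N))
              (((cfList ((a : ℚ) / N)).length : ℤ) - i - 1) = (N : ℤ)) := by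
  refine ⟨fun a ha h2a => (isCF_starMap_div ha h2a).2.2.symm, ?_, ?_⟩
  · have hmaps : Set.MapsTo (starMap N) {a | a ∈ Zstar N ∧ 2 * a ≤ N}
        {a | a ∈ Zstar N ∧ 2 * a ≤ N} := fun a ha => starMap_mem ha.1 ha.2
    have hinv : Set.LeftInvOn (starMap N) (starMap N) {a | a ∈ Zstar N ∧ 2 * a ≤ N} :=
      fun a ha => starMap_starMap ha.1 ha.2
    exact Set.InvOn.bijOn ⟨hinv, hinv⟩ hmaps hmaps
  · intro a ha h2a i _ hi
    rw [cfList_eq (isCF_starMap_div ha h2a), qdenZ_mul_qdenZ_reverse_add _ (by omega) hi,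
      convDen_eq_contMat, (contMat_cfList ha h2a).1]

theorem stmt18 (N : ℕ) (hN : 3 ≤ N) :
    (∀ a, a ∈ Zstar N → 2 * a ≤ N →
        ((starMap N a : ℚ) / N = cfValQ ((cfList ((a : ℚ) / N)).reverse))) ∧
    Set.BijOn (starMap N) {a | a ∈ Zstar N ∧ 2 * a ≤ N} {a | a ∈ Zstar N ∧ 2 * a ≤ N} ∧
    (∀ a, a ∈ Zstar N → 2 * a ≤ N →
      ∀ i : ℤ, 1 ≤ i → i ≤ ((cfList ((a : ℚ) / N)).length : ℤ) →
        qdenZ (cfList ((a : ℚ) / N)) i *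
            qdenZ (cfList ((starMap N a : ℚ) / N)) (((cfList ((a : ℚ) / N)).length : ℤ) - i) +
          qdenZ (cfList ((a : ℚ) / N)) (i - 1) *
            qdenZ (cfList ((starMap N a : ℚ) / N))
              (((cfList ((a : ℚ) / N)).length : ℤ) - i - 1) = (N : ℤ)) :=
  stmt18_general N
end
end
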